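/- Let 1 < p ≤ q ≤ ∞. Suppose the delay system ẋ(t) = f(x_t) is forward complete on C⁰ and there exists σ ∈ KL such that ‖φ(t,x₀)‖_{W^{1,p}} ≤ σ(‖x₀‖_{W^{1,p}}, t) for all t ≥ 0 and all x₀ ∈ W^{1,p}. Then there exists ω ∈ KL such that ‖φ(t,x₀)‖_{W^{1,q}} ≤ ω(‖x₀‖_{W^{1,q}}, t) for all t ≥ 0 and all x₀ ∈ W^{1,q}. -/

import Mathlib

open Set MeasureTheory Filter Topology
open scoped ENNReal NNReal

noncomputable section

abbrev Vec (n : ℕ) := EuclideanSpace ℝ (Fin n)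

variable {n : ℕ}

/-- The segment `x_t` of a history `x : ℝ → ℝⁿ`, i.e. `x_t(s) = x(t+s)`
(only its values on `[-r,0]` are relevant). -/
def seg (r : ℝ) (x : ℝ → Vec n) (t : ℝ) : ℝ → Vec n := fun s => x (t + s)

/-- Sup norm over `[-r,0]`. -/
def supN (r : ℝ) (g : ℝ → Vec n) : ℝ := sSup ((fun s => ‖g s‖) '' Icc (-r) 0)

/-- Membership in `C⁰ = C([-r,0];ℝⁿ)`. -/
def MemC0 (r : ℝ) (g : ℝ → Vec n) : Prop := ContinuousOn g (Icc (-r) 0)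

/-- `f` vanishes at `0`, depends only on the values of its argument on `[-r,0]`,
and is Lipschitz on bounded subsets of `C⁰` with a nondecreasing (nonnegative)
modulus `L`. -/
def GoodRHS (r : ℝ) (f : (ℝ → Vec n) → Vec n) (L : ℝ → ℝ) : Prop :=
  f 0 = 0 ∧
  (∀ x y : ℝ → Vec n, EqOn x y (Icc (-r) 0) → f x = f y) ∧
  Monotone L ∧ (∀ s : ℝ, 0 ≤ L s) ∧
  ∀ R : ℝ, ∀ x y : ℝ → Vec n, MemC0 r x → MemC0 r y → supN r x ≤ R → supN r y ≤ R →
    ‖f x - f y‖ ≤ L R * supN r (x - y)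

/-- `x : ℝ → ℝⁿ` is a solution on `[-r, b)` (with `b ∈ (0,∞]` an extended
nonnegative real) of the delay system `ẋ(t) = f(x_t)` with initial condition `x0`:
it is continuous on `[-r,b)`, coincides with `x0` on `[-r,0]`, and satisfies the
integral equation `x(t) = x(0) + ∫₀ᵗ f(x_s) ds` on `[0,b)`. -/
def IsSol (r : ℝ) (f : (ℝ → Vec n) → Vec n) (x0 x : ℝ → Vec n) (b : ℝ≥0∞) : Prop :=
  ContinuousOn x {t : ℝ | -r ≤ t ∧ ENNReal.ofReal t < b} ∧
  EqOn x x0 (Icc (-r) 0) ∧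
  ∀ t : ℝ, 0 ≤ t → ENNReal.ofReal t < b → x t = x 0 + ∫ s in (0:ℝ)..t, f (seg r x s)

/-- Class `KL` functions `σ : [0,∞)×[0,∞) → [0,∞)`. -/
def ClassKL (σ : ℝ → ℝ → ℝ) : Prop :=
  (∀ s t : ℝ, 0 ≤ s → 0 ≤ t → 0 ≤ σ s t) ∧
  (∀ t : ℝ, 0 ≤ t →
    ContinuousOn (fun s => σ s t) (Ici 0) ∧ StrictMonoOn (fun s => σ s t) (Ici 0) ∧
      σ 0 t = 0) ∧
  (∀ s : ℝ, 0 ≤ s →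
    AntitoneOn (fun t => σ s t) (Ici 0) ∧ Tendsto (fun t => σ s t) atTop (nhds 0))

/-- Class `K∞` functions `a : [0,∞) → [0,∞)`. -/
def ClassKInf (a : ℝ → ℝ) : Prop :=
  (∀ s : ℝ, 0 ≤ s → 0 ≤ a s) ∧ ContinuousOn a (Ici 0) ∧ StrictMonoOn a (Ici 0) ∧
  a 0 = 0 ∧ Tendsto a atTop atTop

/-- The set of Hölder difference quotients `‖g t - g s‖ / |t-s|^α` over a set `S`. -/
def hRatios (α : ℝ) (S : Set ℝ) (g : ℝ → Vec n) : Set ℝ :=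
  {c | ∃ t ∈ S, ∃ s ∈ S, t ≠ s ∧ c = ‖g t - g s‖ / |t - s| ^ α}

/-- Membership in the Hölder space `C^{0,α}([-r,0])`. -/
def MemHol (r α : ℝ) (g : ℝ → Vec n) : Prop :=
  MemC0 r g ∧ BddAbove (hRatios α (Icc (-r) 0) g)

/-- The Hölder norm `max(‖g‖_∞, [g]_α)`. -/
def holderNorm (r α : ℝ) (g : ℝ → Vec n) : ℝ :=
  max (supN r g) (sSup (hRatios α (Icc (-r) 0) g))

/-- Membership in the Sobolev space `W^{1,p}([-r,0])`: `g` is absolutely continuous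
on `[-r,0]` (i.e. the integral of an integrable function `d`, which is then its a.e.
derivative) with `d ∈ L^p((-r,0))`. -/
def MemW (r : ℝ) (p : ℝ≥0∞) (g : ℝ → Vec n) : Prop :=
  ∃ d : ℝ → Vec n, IntegrableOn d (Icc (-r) 0) ∧
    eLpNorm d p (volume.restrict (Ioo (-r) 0)) < ⊤ ∧
    ∀ t ∈ Icc (-r) 0, g t = g (-r) + ∫ s in (-r)..t, d s

/-- The Sobolev norm `‖g‖_∞ + ‖ġ‖_p`; for an absolutely continuous `g` the a.e.
derivative coincides a.e. on `(-r,0)` with `deriv g`. -/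
def sobNorm (r : ℝ) (p : ℝ≥0∞) (g : ℝ → Vec n) : ℝ :=
  supN r g + (eLpNorm (deriv g) p (volume.restrict (Ioo (-r) 0))).toReal

/-- The Hölder exponent `1 - 1/p`, with the convention `1/∞ = 0`. -/
def hexp (p : ℝ≥0∞) : ℝ := 1 - (p.toReal)⁻¹

/-! With `s₀ = ‖x₀‖_{W^{1,q}}`, Hölder on `[-r,0]` gives `‖x₀‖_{W^{1,p}} ≤ C s₀`, so the
W^{1,p} estimate bounds `‖x_t‖_∞` by `σ(C s₀, t)`. It remains to bound the `L^q` norm of the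
derivative of `x_t`, which at `s ∈ (-r,0)` is `ẋ₀(t+s)` when `t+s < 0`, a term that is present
only while `t < r`, and `f(x_{t+s})` when `t+s > 0`, of norm at most
`L(σ(C s₀, 0)) σ(C s₀, max(t-r, 0))` by the Lipschitz estimate. Replacing `L` by its continuous
majorant `u ↦ ∫_u^{u+1} L` makes the resulting bound continuous in `s₀`. -/

lemma supN_nonneg (r : ℝ) (g : ℝ → Vec n) : 0 ≤ supN r g :=
  Real.sSup_nonneg (by rintro y ⟨s, -, rfl⟩; exact norm_nonneg _)

lemma supN_le {r : ℝ} (hr : 0 < r) {g : ℝ → Vec n} {M : ℝ}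
    (h : ∀ s ∈ Icc (-r) 0, ‖g s‖ ≤ M) : supN r g ≤ M :=
  csSup_le ((nonempty_Icc.2 (by linarith)).image _) (by rintro y ⟨s, hs, rfl⟩; exact h s hs)

lemma supN_zero {r : ℝ} (hr : 0 < r) : supN r (0 : ℝ → Vec n) = 0 :=
  le_antisymm (supN_le hr (by simp)) (supN_nonneg _ _)

lemma sobNorm_nonneg (r : ℝ) (p : ℝ≥0∞) (g : ℝ → Vec n) : 0 ≤ sobNorm r p g :=
  add_nonneg (supN_nonneg _ _) ENNReal.toReal_nonneg

lemma supN_le_sobNorm (r : ℝ) (p : ℝ≥0∞) (g : ℝ → Vec n) : supN r g ≤ sobNorm r p g :=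
  le_add_of_nonneg_right ENNReal.toReal_nonneg

lemma continuous_supN_seg_sub (r : ℝ) {y g : ℝ → Vec n} (hy : Continuous y) (hg : Continuous g) :
    Continuous fun τ => supN r (seg r y τ - g) :=
  isCompact_Icc.continuous_sSup (f := fun τ s => ‖y (τ + s) - g s‖) (by fun_prop)

lemma memC0_seg {r : ℝ} {x : ℝ → Vec n} (hx : ContinuousOn x (Ici (-r))) {τ : ℝ} (hτ : 0 ≤ τ) :
    MemC0 r (seg r x τ) :=
  hx.comp (continuous_const_add τ).continuousOn fun s hs => by
    simp only [mem_Ici]; linarith [hs.1]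

lemma volume_Ioo_neg_zero (r : ℝ) : volume.restrict (Ioo (-r) 0) univ = ENNReal.ofReal r := by
  simp

section Steklov

def steklov (L : ℝ → ℝ) (u : ℝ) : ℝ := ∫ v in u..u + 1, L v

variable {L : ℝ → ℝ}

lemma Monotone.continuous_steklov (hL : Monotone L) : Continuous (steklov L) := by
  have hint : ∀ a b : ℝ, IntervalIntegrable L volume a b := fun _ _ => hL.intervalIntegrable
  have hdiff : steklov L = fun u => (∫ v in (0 : ℝ)..u + 1, L v) - ∫ v in (0 : ℝ)..u, L v := by
    funext u
    exact (intervalIntegral.integral_interval_sub_left (hint 0 (u + 1)) (hint 0 u)).symm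
  rw [hdiff]
  exact ((intervalIntegral.continuous_primitive hint 0).comp (continuous_add_const 1)).sub
    (intervalIntegral.continuous_primitive hint 0)

lemma Monotone.monotone_steklov (hL : Monotone L) : Monotone (steklov L) := by
  intro a b hab
  have hshift : ∀ u, steklov L u = ∫ w in (0 : ℝ)..1, L (u + w) := fun u => by
    simp [steklov, intervalIntegral.integral_comp_add_left (fun v => L v) u]
  rw [hshift, hshift]
  exact intervalIntegral.integral_mono_on zero_le_one
    (hL.comp (monotone_id.const_add a)).intervalIntegrable
    (hL.comp (monotone_id.const_add b)).intervalIntegrable fun w _ => hL (by linarith)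

lemma Monotone.le_steklov (hL : Monotone L) (u : ℝ) : L u ≤ steklov L u := by
  calc L u = ∫ _ in u..u + 1, L u := by simp
    _ ≤ steklov L u := intervalIntegral.integral_mono_on (by linarith) intervalIntegrable_const
        hL.intervalIntegrable fun w hw => hL hw.1

end Steklov

/-- `ClassKL` with strict monotonicity in the first argument weakened to monotonicity. -/
def ClassKLWeak (σ : ℝ → ℝ → ℝ) : Prop :=
  (∀ s t : ℝ, 0 ≤ s → 0 ≤ t → 0 ≤ σ s t) ∧
  (∀ t : ℝ, 0 ≤ t →
    ContinuousOn (fun s => σ s t) (Ici 0) ∧ MonotoneOn (fun s => σ s t) (Ici 0) ∧ σ 0 t = 0) ∧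
  (∀ s : ℝ, 0 ≤ s →
    AntitoneOn (fun t => σ s t) (Ici 0) ∧ Tendsto (fun t => σ s t) atTop (𝓝 0))

namespace ClassKL

variable {σ τ : ℝ → ℝ → ℝ}

lemma classKLWeak (hσ : ClassKL σ) : ClassKLWeak σ :=
  ⟨hσ.1, fun t ht => ⟨(hσ.2.1 t ht).1, (hσ.2.1 t ht).2.1.monotoneOn, (hσ.2.1 t ht).2.2⟩, hσ.2.2⟩

lemma add_classKLWeak (hσ : ClassKL σ) (hτ : ClassKLWeak τ) :
    ClassKL fun s t => σ s t + τ s t := by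
  refine ⟨fun s t hs ht => add_nonneg (hσ.1 s t hs ht) (hτ.1 s t hs ht), fun t ht => ?_,
    fun s hs => ?_⟩
  · obtain ⟨hσc, hσm, hσ0⟩ := hσ.2.1 t ht
    obtain ⟨hτc, hτm, hτ0⟩ := hτ.2.1 t ht
    exact ⟨hσc.add hτc, fun a ha b hb hab => add_lt_add_of_lt_of_le (hσm ha hb hab)
      (hτm ha hb hab.le), by simp [hσ0, hτ0]⟩
  · obtain ⟨hσa, hσl⟩ := hσ.2.2 s hs
    obtain ⟨hτa, hτl⟩ := hτ.2.2 s hs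
    exact ⟨fun a ha b hb hab => add_le_add (hσa ha hb hab) (hτa ha hb hab),
      by simpa using hσl.add hτl⟩

lemma comp_mul_left (hσ : ClassKL σ) {C : ℝ} (hC : 0 < C) : ClassKL fun s t => σ (C * s) t := by
  have hCs : MapsTo (C * ·) (Ici (0 : ℝ)) (Ici 0) := fun s hs => mul_nonneg hC.le hs
  refine ⟨fun s t hs ht => hσ.1 _ t (hCs hs) ht, fun t ht => ?_, fun s hs => hσ.2.2 _ (hCs hs)⟩
  obtain ⟨hc, hm, h0⟩ := hσ.2.1 t ht
  exact ⟨hc.comp (continuous_const.mul continuous_id).continuousOn hCs,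
    hm.comp (fun _ _ _ _ h => mul_lt_mul_of_pos_left h hC) hCs, by simpa using h0⟩

lemma comp_delay (hσ : ClassKL σ) (r : ℝ) : ClassKL fun s t => σ s (max (t - r) 0) := by
  refine ⟨fun s t hs _ => hσ.1 s _ hs (le_max_right _ _),
    fun t _ => hσ.2.1 _ (le_max_right _ _), fun s hs => ⟨?_, ?_⟩⟩
  · exact fun a _ b _ hab =>
      (hσ.2.2 s hs).1 (mem_Ici.2 (le_max_right _ _)) (mem_Ici.2 (le_max_right _ _))
        (by gcongr)
  · exact (hσ.2.2 s hs).2.comp <| tendsto_atTop_mono (fun t => le_max_left (t - r) 0)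
      (tendsto_atTop_add_const_right atTop (-r) tendsto_id)

end ClassKL

namespace ClassKLWeak

variable {σ τ : ℝ → ℝ → ℝ}

lemma add (hσ : ClassKLWeak σ) (hτ : ClassKLWeak τ) : ClassKLWeak fun s t => σ s t + τ s t := by
  refine ⟨fun s t hs ht => add_nonneg (hσ.1 s t hs ht) (hτ.1 s t hs ht), fun t ht => ?_,
    fun s hs => ?_⟩
  · obtain ⟨hσc, hσm, hσ0⟩ := hσ.2.1 t ht
    obtain ⟨hτc, hτm, hτ0⟩ := hτ.2.1 t ht
    exact ⟨hσc.add hτc, fun a ha b hb hab => add_le_add (hσm ha hb hab) (hτm ha hb hab),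
      by simp [hσ0, hτ0]⟩
  · obtain ⟨hσa, hσl⟩ := hσ.2.2 s hs
    obtain ⟨hτa, hτl⟩ := hτ.2.2 s hs
    exact ⟨fun a ha b hb hab => add_le_add (hσa ha hb hab) (hτa ha hb hab),
      by simpa using hσl.add hτl⟩

lemma mul_left (hσ : ClassKLWeak σ) {k : ℝ → ℝ} (hkc : ContinuousOn k (Ici 0))
    (hkm : MonotoneOn k (Ici 0)) (hk0 : ∀ s, 0 ≤ s → 0 ≤ k s) :
    ClassKLWeak fun s t => k s * σ s t := by
  refine ⟨fun s t hs ht => mul_nonneg (hk0 s hs) (hσ.1 s t hs ht), fun t ht => ?_,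
    fun s hs => ?_⟩
  · obtain ⟨hσc, hσm, hσ0⟩ := hσ.2.1 t ht
    exact ⟨hkc.mul hσc, fun a ha b hb hab => mul_le_mul (hkm ha hb hab) (hσm ha hb hab)
      (hσ.1 a t ha ht) (hk0 b hb), by simp [hσ0]⟩
  · obtain ⟨hσa, hσl⟩ := hσ.2.2 s hs
    exact ⟨fun a ha b hb hab => mul_le_mul_of_nonneg_left (hσa ha hb hab) (hk0 s hs),
      by simpa using hσl.const_mul (k s)⟩

end ClassKLWeak

lemma classKLWeak_mul_cutoff {r : ℝ} (hr : 0 < r) :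
    ClassKLWeak fun s t => s * max (2 - t / r) 0 := by
  refine ⟨fun s t hs _ => mul_nonneg hs (le_max_right _ _), fun t _ => ⟨by fun_prop,
    fun a _ b _ hab => mul_le_mul_of_nonneg_right hab (le_max_right _ _), zero_mul _⟩,
    fun s hs => ⟨fun a _ b _ hab => mul_le_mul_of_nonneg_left (by gcongr) hs, ?_⟩⟩
  refine tendsto_const_nhds.congr' ?_
  filter_upwards [eventually_ge_atTop (2 * r)] with t ht
  rw [max_eq_right (by rw [sub_nonpos, le_div_iff₀ hr]; linarith), mul_zero]

namespace GoodRHS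

variable {r : ℝ} {f : (ℝ → Vec n) → Vec n} {L : ℝ → ℝ}

lemma norm_le (hf : GoodRHS r f L) (hr : 0 < r) {g : ℝ → Vec n} (hg : MemC0 r g) {R : ℝ}
    (hR : supN r g ≤ R) : ‖f g‖ ≤ L R * supN r g := by
  have h := hf.2.2.2.2 R g 0 hg continuousOn_const hR
    ((supN_zero hr).trans_le ((supN_nonneg r g).trans hR))
  rwa [hf.1, sub_zero, sub_zero] at h

lemma continuousOn_comp_seg (hf : GoodRHS r f L) (hr : 0 < r) {x : ℝ → Vec n}
    (hx : ContinuousOn x (Ici (-r))) : ContinuousOn (fun τ => f (seg r x τ)) (Ici 0) := by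
  -- extend `x` continuously to `ℝ`, so that sup norms of its segments vary continuously
  set y : ℝ → Vec n := fun u => x (max u (-r))
  have hy : Continuous y :=
    hx.comp_continuous (continuous_id.max continuous_const) fun u => le_max_right u (-r)
  have hxy : ∀ τ ∈ Ici (0 : ℝ), f (seg r x τ) = f (seg r y τ) := fun τ hτ =>
    hf.2.1 _ _ fun s hs => by
      simp only [seg, y, max_eq_left (show -r ≤ τ + s by linarith [hs.1, mem_Ici.1 hτ])]
  refine ContinuousOn.congr (Continuous.continuousOn ?_) hxy
  refine continuous_iff_continuousAt.2 fun τ₀ => ?_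
  set R := supN r (seg r y τ₀) + 1
  have hnear : ∀ᶠ τ in 𝓝 τ₀, supN r (seg r y τ) ≤ R := by
    have h := (continuous_supN_seg_sub r hy continuous_const (g := 0)).tendsto τ₀
    simp only [sub_zero] at h
    exact h.eventually_le_const (lt_add_one _)
  have hdist : Tendsto (fun τ => supN r (seg r y τ - seg r y τ₀)) (𝓝 τ₀) (𝓝 0) := by
    have h := (continuous_supN_seg_sub r hy (g := seg r y τ₀)
      (hy.comp (continuous_const_add τ₀))).tendsto τ₀
    rwa [sub_self, supN_zero hr] at h
  have hmem : ∀ τ, MemC0 r (seg r y τ) := fun τ =>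
    (hy.comp (continuous_const_add τ)).continuousOn
  rw [ContinuousAt, tendsto_iff_norm_sub_tendsto_zero]
  refine squeeze_zero' (Eventually.of_forall fun _ => norm_nonneg _) ?_
    (by simpa using hdist.const_mul (L R))
  filter_upwards [hnear] with τ hτ
  exact hf.2.2.2.2 R _ _ (hmem τ) (hmem τ₀) hτ (by linarith)

end GoodRHS

namespace IsSol

variable {r : ℝ} {f : (ℝ → Vec n) → Vec n} {x0 x : ℝ → Vec n}

lemma continuousOn (hsol : IsSol r f x0 x ⊤) : ContinuousOn x (Ici (-r)) := by
  simpa [Ici, ENNReal.ofReal_lt_top] using hsol.1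

lemma hasDerivAt (hsol : IsSol r f x0 x ⊤) (hg : ContinuousOn (fun τ => f (seg r x τ)) (Ici 0))
    {τ : ℝ} (hτ : 0 < τ) : HasDerivAt x (f (seg r x τ)) τ := by
  have hint : IntervalIntegrable (fun τ => f (seg r x τ)) volume 0 τ :=
    (hg.mono (by simp [uIcc_of_le hτ.le, Icc_subset_Ici_self])).intervalIntegrable
  have hprim := intervalIntegral.integral_hasDerivAt_right hint
    (hg.stronglyMeasurableAtFilter_nhdsWithin measurableSet_Ici τ |>.filter_mono
      (nhdsWithin_eq_nhds.2 (Ici_mem_nhds hτ)).ge)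
    (hg.continuousAt (Ici_mem_nhds hτ))
  refine (hprim.const_add (x 0)).congr_of_eventuallyEq ?_
  filter_upwards [Ioi_mem_nhds hτ] with u hu
  exact hsol.2.2 u (le_of_lt hu) ENNReal.ofReal_lt_top

lemma deriv_eq (hsol : IsSol r f x0 x ⊤) {τ : ℝ} (hτ : τ ∈ Ioo (-r) 0) :
    deriv x τ = deriv x0 τ :=
  Filter.EventuallyEq.deriv_eq <| eventually_of_mem (isOpen_Ioo.mem_nhds hτ)
    fun _ hu => hsol.2.1 (Ioo_subset_Icc_self hu)

end IsSol

lemma ae_deriv_eq_of_eq_integral {E : Type*} [NormedAddCommGroup E] [NormedSpace ℝ E]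
    [CompleteSpace E] {g d : ℝ → E} {a b : ℝ} (hd : IntervalIntegrable d volume a b)
    (hg : ∀ t ∈ Icc a b, g t = g a + ∫ s in a..t, d s) :
    ∀ᵐ t ∂volume.restrict (Ioo a b), deriv g t = d t := by
  rw [ae_restrict_iff' measurableSet_Ioo]
  filter_upwards [hd.ae_hasDerivAt_integral] with t ht htI
  have hab : a ≤ b := (htI.1.trans htI.2).le
  have hprim := ht (by rw [uIcc_of_le hab]; exact Ioo_subset_Icc_self htI) a left_mem_uIcc
  refine ((hprim.const_add (g a)).congr_of_eventuallyEq ?_).deriv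
  filter_upwards [isOpen_Ioo.mem_nhds htI] with u hu using hg u (Ioo_subset_Icc_self hu)

lemma eLpNorm_comp_const_add_le {E : Type*} [NormedAddCommGroup E] {G : ℝ → E}
    (hG : AEStronglyMeasurable G volume) (t : ℝ) (p : ℝ≥0∞) (S : Set ℝ) :
    eLpNorm (fun s => G (t + s)) p (volume.restrict S) ≤ eLpNorm G p volume :=
  (eLpNorm_mono_measure _ Measure.restrict_le_self).trans
    (eLpNorm_comp_measurePreserving hG (measurePreserving_add_left volume t)).le

namespace MemW

variable {r : ℝ} {p q : ℝ≥0∞} {g : ℝ → Vec n}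

lemma eLpNorm_deriv_lt_top (hr : 0 ≤ r) (hg : MemW r p g) :
    eLpNorm (deriv g) p (volume.restrict (Ioo (-r) 0)) < ⊤ := by
  obtain ⟨d, hd, hdp, hgd⟩ := hg
  have hdi : IntervalIntegrable d volume (-r) 0 :=
    (intervalIntegrable_iff_integrableOn_Icc_of_le (by linarith)).2 hd
  rwa [eLpNorm_congr_ae (ae_deriv_eq_of_eq_integral hdi hgd)]

lemma mono_exponent (hr : 0 < r) (hpq : p ≤ q) (hg : MemW r q g) : MemW r p g := by
  obtain ⟨d, hd, hdq, hgd⟩ := hg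
  refine ⟨d, hd, ?_, hgd⟩
  calc eLpNorm d p (volume.restrict (Ioo (-r) 0))
      ≤ eLpNorm d q (volume.restrict (Ioo (-r) 0)) *
          ENNReal.ofReal r ^ (1 / p.toReal - 1 / q.toReal) := by
        simpa using eLpNorm_le_eLpNorm_mul_rpow_measure_univ hpq
          (hd.mono_set Ioo_subset_Icc_self).aestronglyMeasurable
    _ < ⊤ := ENNReal.mul_lt_top hdq
        (ENNReal.rpow_ne_top_of_ne_zero (by simpa using hr) ENNReal.ofReal_ne_top).lt_top

lemma sobNorm_le (hr : 0 < r) (hpq : p ≤ q) (hg : MemW r q g) :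
    sobNorm r p g ≤ max 1 (r ^ (1 / p.toReal - 1 / q.toReal)) * sobNorm r q g := by
  set C := max 1 (r ^ (1 / p.toReal - 1 / q.toReal))
  set μ := volume.restrict (Ioo (-r) 0)
  have hrθ : ENNReal.ofReal r ^ (1 / p.toReal - 1 / q.toReal) ≠ ⊤ :=
    ENNReal.rpow_ne_top_of_ne_zero (by simpa using hr) ENNReal.ofReal_ne_top
  have hHolder : (eLpNorm (deriv g) p μ).toReal
      ≤ (eLpNorm (deriv g) q μ).toReal * r ^ (1 / p.toReal - 1 / q.toReal) := by
    have h := eLpNorm_le_eLpNorm_mul_rpow_measure_univ hpq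
      (stronglyMeasurable_deriv g).aestronglyMeasurable (μ := μ)
    rw [volume_Ioo_neg_zero] at h
    have h' := ENNReal.toReal_mono (ENNReal.mul_ne_top (hg.eLpNorm_deriv_lt_top hr.le).ne hrθ) h
    rwa [ENNReal.toReal_mul, ← ENNReal.toReal_rpow, ENNReal.toReal_ofReal hr.le] at h'
  have hsup : supN r g ≤ C * supN r g := le_mul_of_one_le_left (supN_nonneg r g) (le_max_left _ _)
  have hder : (eLpNorm (deriv g) q μ).toReal * r ^ (1 / p.toReal - 1 / q.toReal)
      ≤ C * (eLpNorm (deriv g) q μ).toReal := by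
    rw [mul_comm]; exact mul_le_mul_of_nonneg_right (le_max_right _ _) ENNReal.toReal_nonneg
  simp only [sobNorm, mul_add]
  linarith

end MemW

section SegmentEstimate

variable {r : ℝ} {f : (ℝ → Vec n) → Vec n} {L : ℝ → ℝ} {q : ℝ≥0∞} {x0 x : ℝ → Vec n}

lemma eLpNorm_deriv_seg_le (hr : 0 < r) (hf : GoodRHS r f L) (hq : 1 ≤ q)
    (hsol : IsSol r f x0 x ⊤) {t : ℝ} (ht : 0 ≤ t) {K : ℝ}
    (hK : ∀ τ, 0 < τ → t - r < τ → ‖f (seg r x τ)‖ ≤ K) :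
    eLpNorm (deriv (seg r x t)) q (volume.restrict (Ioo (-r) 0))
      ≤ eLpNorm (fun s => (Ioo (-r) 0).indicator (deriv x0) (t + s)) q
          (volume.restrict (Ioo (-r) 0)) + ENNReal.ofReal r ^ q.toReal⁻¹ * ENNReal.ofReal K := by
  set μ := volume.restrict (Ioo (-r) 0)
  set G := (Ioo (-r) 0).indicator (deriv x0)
  have hK0 : 0 ≤ K := (norm_nonneg _).trans (hK (t + 1) (by linarith) (by linarith))
  have hcont := hf.continuousOn_comp_seg hr hsol.continuousOn
  have hpt : ∀ᵐ s ∂μ, ‖deriv (seg r x t) s‖ ≤ ‖G (t + s)‖ + K := by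
    have hne : ∀ᵐ s ∂μ, s ≠ -t := ae_restrict_of_ae (by simp [ae_iff, measure_singleton])
    filter_upwards [hne, ae_restrict_mem measurableSet_Ioo] with s hs hsI
    rw [show deriv (seg r x t) s = deriv x (t + s) from deriv_comp_const_add x t s]
    rcases lt_or_gt_of_ne hs with hlt | hgt
    · have htsI : t + s ∈ Ioo (-r) 0 := ⟨by linarith [hsI.1], by linarith⟩
      rw [hsol.deriv_eq htsI, show G (t + s) = deriv x0 (t + s) from indicator_of_mem htsI _]
      exact le_add_of_nonneg_right hK0
    · rw [(hsol.hasDerivAt hcont (show 0 < t + s by linarith)).deriv]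
      exact (hK _ (by linarith) (by linarith [hsI.2, hsI.1])).trans
        (le_add_of_nonneg_left (norm_nonneg _))
  have hGm : AEStronglyMeasurable (fun s => G (t + s)) μ :=
    (((stronglyMeasurable_deriv x0).indicator measurableSet_Ioo).comp_measurable
      (measurable_const_add t)).aestronglyMeasurable
  calc eLpNorm (deriv (seg r x t)) q μ ≤ eLpNorm (fun s => ‖G (t + s)‖ + K) q μ :=
        eLpNorm_mono_ae_real hpt
    _ ≤ eLpNorm (fun s => ‖G (t + s)‖) q μ + eLpNorm (fun _ => K) q μ :=
        eLpNorm_add_le hGm.norm aestronglyMeasurable_const hq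
    _ ≤ _ := by
        rw [eLpNorm_norm (fun s => G (t + s))]
        gcongr
        simpa [μ] using eLpNorm_le_of_ae_bound (μ := μ) (p := q) (f := fun _ : ℝ => K)
          (Eventually.of_forall fun _ => (Real.norm_of_nonneg hK0).le)

lemma eLpNorm_history_le (hr : 0 < r) (hx0 : MemW r q x0) (t : ℝ) :
    eLpNorm (fun s => (Ioo (-r) 0).indicator (deriv x0) (t + s)) q
      (volume.restrict (Ioo (-r) 0)) ≤ ENNReal.ofReal (sobNorm r q x0 * max (2 - t / r) 0) := by
  rcases lt_or_ge t r with htr | htr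
  · have hcut : 1 ≤ max (2 - t / r) 0 :=
      le_max_of_le_left (by linarith [(div_lt_one hr).2 htr])
    have hshift := eLpNorm_comp_const_add_le (G := (Ioo (-r) 0).indicator (deriv x0))
      ((stronglyMeasurable_deriv x0).indicator measurableSet_Ioo).aestronglyMeasurable t q
      (Ioo (-r) 0)
    rw [eLpNorm_indicator_eq_eLpNorm_restrict measurableSet_Ioo,
      ← ENNReal.ofReal_toReal (hx0.eLpNorm_deriv_lt_top hr.le).ne] at hshift
    refine hshift.trans (ENNReal.ofReal_le_ofReal ?_)
    calc _ ≤ sobNorm r q x0 := by rw [sobNorm]; exact le_add_of_nonneg_left (supN_nonneg _ _)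
      _ ≤ _ := le_mul_of_one_le_right (sobNorm_nonneg _ _ _) hcut
  · -- once `t ≥ r`, the window `t + s`, `s ∈ (-r, 0)`, lies in `(0, ∞)`
    refine le_of_eq_of_le ?_ (zero_le (α := ℝ≥0∞))
    rw [← eLpNorm_zero (ε := Vec n) (p := q) (μ := volume.restrict (Ioo (-r) 0))]
    refine eLpNorm_congr_ae ?_
    filter_upwards [ae_restrict_mem measurableSet_Ioo] with s hs
    exact indicator_of_notMem (fun h => by linarith [h.2, hs.1]) _

lemma sobNorm_seg_le (hr : 0 < r) (hf : GoodRHS r f L) (hq : 1 ≤ q) (hx0 : MemW r q x0)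
    (hsol : IsSol r f x0 x ⊤) {β : ℝ → ℝ} (hβ : AntitoneOn β (Ici 0))
    (hsup : ∀ τ, 0 ≤ τ → supN r (seg r x τ) ≤ β τ) {t : ℝ} (ht : 0 ≤ t) :
    sobNorm r q (seg r x t) ≤ β t + (r ^ q.toReal⁻¹ * L (β 0) * β (max (t - r) 0)
      + sobNorm r q x0 * max (2 - t / r) 0) := by
  set K := L (β 0) * β (max (t - r) 0)
  have hL0 := hf.2.2.2.1 (β 0)
  have hK : ∀ τ, 0 < τ → t - r < τ → ‖f (seg r x τ)‖ ≤ K := fun τ hτ hτt => by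
    have hτ' : max (t - r) 0 ≤ τ := max_le hτt.le hτ.le
    calc ‖f (seg r x τ)‖ ≤ L (β 0) * supN r (seg r x τ) :=
          hf.norm_le hr (memC0_seg hsol.continuousOn hτ.le)
            ((hsup τ hτ.le).trans (hβ self_mem_Ici hτ.le hτ.le))
      _ ≤ K := mul_le_mul_of_nonneg_left ((hsup τ hτ.le).trans
          (hβ (mem_Ici.2 (le_max_right _ _)) hτ.le hτ')) hL0
  have hK0 : 0 ≤ K := (norm_nonneg _).trans (hK (t + r) (by linarith) (by linarith))
  have hhist0 : 0 ≤ sobNorm r q x0 * max (2 - t / r) 0 :=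
    mul_nonneg (sobNorm_nonneg _ _ _) (le_max_right _ _)
  have hrq : 0 ≤ r ^ q.toReal⁻¹ := Real.rpow_nonneg hr.le _
  have hD : eLpNorm (deriv (seg r x t)) q (volume.restrict (Ioo (-r) 0))
      ≤ ENNReal.ofReal (sobNorm r q x0 * max (2 - t / r) 0 + r ^ q.toReal⁻¹ * K) := by
    rw [ENNReal.ofReal_add hhist0 (mul_nonneg hrq hK0), ENNReal.ofReal_mul hrq,
      ← ENNReal.ofReal_rpow_of_nonneg hr.le (inv_nonneg.2 ENNReal.toReal_nonneg)]
    exact (eLpNorm_deriv_seg_le hr hf hq hsol ht hK).trans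
      (add_le_add_left (eLpNorm_history_le hr hx0 t) _)
  have hDreal := ENNReal.toReal_le_of_le_ofReal (add_nonneg hhist0 (mul_nonneg hrq hK0)) hD
  rw [sobNorm]
  linarith [hsup t ht]

end SegmentEstimate

theorem stmt5_general (n : ℕ) (r : ℝ) (hr : 0 < r)
    (f : (ℝ → Vec n) → Vec n) (L : ℝ → ℝ) (hf : GoodRHS r f L)
    (p q : ℝ≥0∞) (hp : 1 < p) (hpq : p ≤ q)
    (σ : ℝ → ℝ → ℝ) (hσ : ClassKL σ)
    (hUG : ∀ x0 x : ℝ → Vec n, MemW r p x0 → IsSol r f x0 x ⊤ →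
      ∀ t : ℝ, 0 ≤ t → sobNorm r p (seg r x t) ≤ σ (sobNorm r p x0) t) :
    ∃ ω : ℝ → ℝ → ℝ, ClassKL ω ∧ ∀ x0 x : ℝ → Vec n, MemW r q x0 → IsSol r f x0 x ⊤ →
      ∀ t : ℝ, 0 ≤ t → sobNorm r q (seg r x t) ≤ ω (sobNorm r q x0) t := by
  have hL := hf.2.2.1
  set C := max 1 (r ^ (1 / p.toReal - 1 / q.toReal))
  have hC : 1 ≤ C := le_max_left _ _
  have hrq : 0 ≤ r ^ q.toReal⁻¹ := Real.rpow_nonneg hr.le _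
  have hσ0 := hσ.2.1 0 le_rfl
  have hgain : ClassKLWeak fun s t => r ^ q.toReal⁻¹ * steklov L (σ s 0) * σ s (max (t - r) 0) :=
    (hσ.comp_delay r).classKLWeak.mul_left
      (continuousOn_const.mul (hL.continuous_steklov.comp_continuousOn hσ0.1))
      (fun a ha b hb hab => mul_le_mul_of_nonneg_left
        (hL.monotone_steklov (hσ0.2.1.monotoneOn ha hb hab)) hrq)
      (fun s _ => mul_nonneg hrq ((hf.2.2.2.1 _).trans (hL.le_steklov _)))
  refine ⟨_, ((hσ.add_classKLWeak (hgain.add (classKLWeak_mul_cutoff hr))).comp_mul_left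
    (zero_lt_one.trans_le hC)), fun x0 x hx0 hsol t ht => ?_⟩
  set s₀ := sobNorm r q x0
  have hs₀ : 0 ≤ C * s₀ := mul_nonneg (zero_le_one.trans hC) (sobNorm_nonneg _ _ _)
  have hsup : ∀ τ, 0 ≤ τ → supN r (seg r x τ) ≤ σ (C * s₀) τ := fun τ hτ =>
    (supN_le_sobNorm r p _).trans <| (hUG x0 x (hx0.mono_exponent hr hpq) hsol τ hτ).trans <|
      (hσ.2.1 τ hτ).2.1.monotoneOn (sobNorm_nonneg _ _ _) hs₀ (hx0.sobNorm_le hr hpq)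
  have hseg := sobNorm_seg_le hr hf (hp.le.trans hpq) hx0 hsol (hσ.2.2 _ hs₀).1 hsup ht
  have hgain_le : L (σ (C * s₀) 0) * σ (C * s₀) (max (t - r) 0)
      ≤ steklov L (σ (C * s₀) 0) * σ (C * s₀) (max (t - r) 0) :=
    mul_le_mul_of_nonneg_right (hL.le_steklov _) (hσ.1 _ _ hs₀ (le_max_right _ _))
  have hcut : s₀ * max (2 - t / r) 0 ≤ C * s₀ * max (2 - t / r) 0 :=
    mul_le_mul_of_nonneg_right (le_mul_of_one_le_left (sobNorm_nonneg _ _ _) hC)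
      (le_max_right _ _)
  linarith [mul_le_mul_of_nonneg_left hgain_le hrq]

/-- UGAS in `W^{1,p}` implies UGAS in `W^{1,q}` for `1 < p ≤ q ≤ ∞`,
for a forward-complete system on `C⁰`. -/
theorem stmt5 (n : ℕ) (hn : 1 ≤ n) (r : ℝ) (hr : 0 < r)
    (f : (ℝ → Vec n) → Vec n) (L : ℝ → ℝ) (hf : GoodRHS r f L)
    (p q : ℝ≥0∞) (hp : 1 < p) (hpq : p ≤ q)
    (hFC : ∀ x0 : ℝ → Vec n, MemC0 r x0 → ∃ x : ℝ → Vec n, IsSol r f x0 x ⊤)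
    (σ : ℝ → ℝ → ℝ) (hσ : ClassKL σ)
    (hUG : ∀ x0 x : ℝ → Vec n, MemW r p x0 → IsSol r f x0 x ⊤ →
      ∀ t : ℝ, 0 ≤ t → sobNorm r p (seg r x t) ≤ σ (sobNorm r p x0) t) :
    ∃ ω : ℝ → ℝ → ℝ, ClassKL ω ∧ ∀ x0 x : ℝ → Vec n, MemW r q x0 → IsSol r f x0 x ⊤ →
      ∀ t : ℝ, 0 ≤ t → sobNorm r q (seg r x t) ≤ ω (sobNorm r q x0) t :=
  stmt5_general n r hr f L hf p q hp hpq σ hσ hUG
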